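/- An integral domain D is v-sharp if and only if D is completely integrally closed. In particular, for any star operation * on D, a *-sharp domain is completely integrally closed. -/

import Mathlib

/-!
Both conditions are equivalent to every nonzero ideal being `v`-invertible, `(I I⁻¹)_v = D`.
If `D` is completely integrally closed and `z I I⁻¹ ⊆ D`, then `z I⁻¹ ⊆ I⁻¹`, so `z` is almost
integral and lies in `D`; conversely an almost integral `x` stabilises the integral ideal `A`
spanned by the `d xⁿ`, so `x ∈ (A A⁻¹)⁻¹ = D`. Applying `v`-sharpness to `A · cA⁻¹ ⊆ (c)` for a
nonzero `c ∈ A` yields `(c) = (H J)_v ⊆ c (A A⁻¹)_v`, i.e. `A` is `v`-invertible; conversely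
`v`-invertibility of `H = A + I` makes `H` and `J = (I H⁻¹)_v` a valid choice in the definition of
sharpness. Finally `I* ⊆ I_v` for every star operation, so `(I*)_v = I_v` and `*`-sharp domains
are `v`-sharp.
-/

open scoped nonZeroDivisors

/-- A star operation on an integral domain `D` with quotient field `K`: a map
`I ↦ I*` on (nonzero) fractional ideals such that `D* = D`, `(aI)* = a·I*`,
`I ⊆ I*`, `I ⊆ J → I* ⊆ J*` and `(I*)* = I*`. (The value at `0` is irrelevant.) -/
structure StarOperation (D K : Type*) [CommRing D] [IsDomain D] [Field K]
    [Algebra D K] [IsFractionRing D K] where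
  star : FractionalIdeal D⁰ K → FractionalIdeal D⁰ K
  star_one : star 1 = 1
  star_smul : ∀ (a : K), a ≠ 0 → ∀ I : FractionalIdeal D⁰ K, I ≠ 0 →
    star (FractionalIdeal.spanSingleton D⁰ a * I) = FractionalIdeal.spanSingleton D⁰ a * star I
  le_star : ∀ I : FractionalIdeal D⁰ K, I ≠ 0 → I ≤ star I
  star_mono : ∀ I J : FractionalIdeal D⁰ K, I ≠ 0 → J ≠ 0 → I ≤ J → star I ≤ star J
  star_star : ∀ I : FractionalIdeal D⁰ K, I ≠ 0 → star (star I) = star I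

/-- `D` is completely integrally closed (in its quotient field `K`): every almost
integral element of `K` over `D` belongs to `D`. -/
def IsCompletelyIntegrallyClosed (D K : Type*) [CommRing D] [IsDomain D] [Field K]
    [Algebra D K] [IsFractionRing D K] : Prop :=
  ∀ x : K, (∃ d : D, d ≠ 0 ∧ ∀ n : ℕ, ∃ a : D, algebraMap D K a = algebraMap D K d * x ^ n) →
    ∃ b : D, algebraMap D K b = x

section StarSharpDefs

variable {D K : Type*} [CommRing D] [IsDomain D] [Field K] [Algebra D K] [IsFractionRing D K]

/-- `D` is sharp with respect to the operation `star` ("`*`-sharp"): whenever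
`I ⊇ A·B` for nonzero ideals `I, A, B` of `D`, there exist nonzero ideals `H, J`
with `I* = (HJ)*`, `H* ⊇ A` and `J* ⊇ B`. -/
def IsSharpOp (star : FractionalIdeal D⁰ K → FractionalIdeal D⁰ K) : Prop :=
  ∀ I A B : Ideal D, I ≠ 0 → A ≠ 0 → B ≠ 0 → A * B ≤ I →
    ∃ H J : Ideal D, H ≠ 0 ∧ J ≠ 0 ∧
      star (I : FractionalIdeal D⁰ K) =
        star ((H : FractionalIdeal D⁰ K) * (J : FractionalIdeal D⁰ K)) ∧
      (A : FractionalIdeal D⁰ K) ≤ star (H : FractionalIdeal D⁰ K) ∧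
      (B : FractionalIdeal D⁰ K) ≤ star (J : FractionalIdeal D⁰ K)

/-- `D` is `*`-sharp for the star operation `s`. -/
def StarOperation.IsSharp (s : StarOperation D K) : Prop :=
  IsSharpOp s.star

theorem inv_ne_zero' {I : FractionalIdeal D⁰ K} (hI : I ≠ 0) : I⁻¹ ≠ 0 := by
  obtain ⟨d, hd, hdI⟩ := I.isFractional
  have hmem : algebraMap D K d ∈ I⁻¹ := by
    rw [FractionalIdeal.mem_inv_iff hI]
    intro y hy
    obtain ⟨c, hc⟩ := hdI y hy
    refine ⟨c, trivial, ?_⟩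
    simpa [Algebra.smul_def] using hc
  intro h0
  rw [h0] at hmem
  have : algebraMap D K d ≠ 0 :=
    IsFractionRing.to_map_ne_zero_of_mem_nonZeroDivisors hd
  exact this (by simpa using hmem)

/-- The `v`-operation `I ↦ I_v = (I⁻¹)⁻¹`. -/
noncomputable def vOp (I : FractionalIdeal D⁰ K) : FractionalIdeal D⁰ K := (I⁻¹)⁻¹

theorem vOp_mono {I J : FractionalIdeal D⁰ K} (h : I ≤ J) : vOp I ≤ vOp J := by
  rcases eq_or_ne I 0 with rfl | hI
  · show ((0 : FractionalIdeal D⁰ K)⁻¹)⁻¹ ≤ vOp J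
    rw [FractionalIdeal.inv_zero', FractionalIdeal.inv_zero']
    exact FractionalIdeal.zero_le _
  have hJ : J ≠ 0 := fun hJ0 => hI (le_antisymm (hJ0 ▸ h) (FractionalIdeal.zero_le I))
  exact FractionalIdeal.inv_anti_mono (inv_ne_zero' hJ) (inv_ne_zero' hI)
    (FractionalIdeal.inv_anti_mono hI hJ h)

end StarSharpDefs

namespace FractionalIdeal

variable {D K : Type*} [CommRing D] [IsDomain D] [Field K] [Algebra D K] [IsFractionRing D K]

instance : NoZeroDivisors (FractionalIdeal D⁰ K) where
  eq_zero_or_eq_zero_of_mul_eq_zero h := by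
    simpa only [← coeToSubmodule_inj, coe_mul, coe_zero, Submodule.mul_eq_bot] using h

theorem mul_inv_self_le_one (I : FractionalIdeal D⁰ K) : I * I⁻¹ ≤ 1 :=
  mul_one_div_le_one

theorem le_inv_iff_mul_le_one {I J : FractionalIdeal D⁰ K} (hJ : J ≠ 0) :
    I ≤ J⁻¹ ↔ I * J ≤ 1 :=
  le_div_iff_mul_le hJ

theorem inv_spanSingleton_mul {a : K} (ha : a ≠ 0) (I : FractionalIdeal D⁰ K) :
    (spanSingleton D⁰ a * I)⁻¹ = spanSingleton D⁰ a⁻¹ * I⁻¹ := by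
  rcases eq_or_ne I 0 with rfl | hI
  · simp only [mul_zero, inv_zero']
  have haI : spanSingleton D⁰ a * I ≠ 0 := mul_ne_zero (spanSingleton_ne_zero_iff.mpr ha) hI
  have hcancel : spanSingleton D⁰ a⁻¹ * spanSingleton D⁰ a = 1 := by
    rw [← spanSingleton_inv, spanSingleton_inv_mul K ha]
  apply le_antisymm
  · have h : spanSingleton D⁰ a * (spanSingleton D⁰ a * I)⁻¹ ≤ I⁻¹ := by
      rw [le_inv_iff_mul_le_one hI, mul_right_comm]
      exact mul_inv_self_le_one _
    calc (spanSingleton D⁰ a * I)⁻¹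
        = spanSingleton D⁰ a⁻¹ * (spanSingleton D⁰ a * (spanSingleton D⁰ a * I)⁻¹) := by
          rw [← mul_assoc, hcancel, one_mul]
      _ ≤ spanSingleton D⁰ a⁻¹ * I⁻¹ := by gcongr
  · rw [le_inv_iff_mul_le_one haI]
    calc spanSingleton D⁰ a⁻¹ * I⁻¹ * (spanSingleton D⁰ a * I)
        = (spanSingleton D⁰ a⁻¹ * spanSingleton D⁰ a) * (I * I⁻¹) := by ring
      _ ≤ 1 := by rw [hcancel, one_mul]; exact mul_inv_self_le_one I

theorem spanSingleton_mul_le_spanSingleton_mul_iff {a : K} (ha : a ≠ 0)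
    {I J : FractionalIdeal D⁰ K} : spanSingleton D⁰ a * I ≤ spanSingleton D⁰ a * J ↔ I ≤ J := by
  refine ⟨fun h => ?_, fun h => by gcongr⟩
  have hcancel : spanSingleton D⁰ a⁻¹ * spanSingleton D⁰ a = 1 := by
    rw [← spanSingleton_inv, spanSingleton_inv_mul K ha]
  simpa only [← mul_assoc, hcancel, one_mul] using mul_le_mul_right h (spanSingleton D⁰ a⁻¹)

theorem le_spanSingleton_mul_inv_iff {a : K} (ha : a ≠ 0) {I J : FractionalIdeal D⁰ K}
    (hJ : J ≠ 0) : I ≤ spanSingleton D⁰ a * J⁻¹ ↔ I * J ≤ spanSingleton D⁰ a := by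
  rw [← spanSingleton_mul_le_spanSingleton_mul_iff (inv_ne_zero ha), ← mul_assoc,
    ← spanSingleton_inv, spanSingleton_inv_mul K ha, one_mul, le_inv_iff_mul_le_one hJ, mul_assoc,
    ← spanSingleton_mul_le_spanSingleton_mul_iff ha, ← mul_assoc, spanSingleton_mul_inv K ha,
    one_mul, mul_one]

end FractionalIdeal

section

open FractionalIdeal

variable {D K : Type*} [CommRing D] [IsDomain D] [Field K] [Algebra D K] [IsFractionRing D K]

theorem le_vOp (I : FractionalIdeal D⁰ K) : I ≤ vOp I := by
  rcases eq_or_ne I 0 with rfl | hI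
  · exact zero_le _
  rw [vOp, le_inv_iff_mul_le_one (inv_ne_zero' hI)]
  exact mul_inv_self_le_one I

theorem vOp_eq_zero_iff {I : FractionalIdeal D⁰ K} : vOp I = 0 ↔ I = 0 := by
  refine ⟨fun h => le_antisymm (h ▸ le_vOp I) (zero_le I), ?_⟩
  rintro rfl
  simp only [vOp, inv_zero']

theorem inv_vOp (I : FractionalIdeal D⁰ K) : (vOp I)⁻¹ = I⁻¹ := by
  rcases eq_or_ne I 0 with rfl | hI
  · simp only [vOp, inv_zero']
  exact le_antisymm (inv_anti_mono hI (vOp_eq_zero_iff.not.mpr hI) (le_vOp I)) (le_vOp I⁻¹)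

theorem vOp_vOp (I : FractionalIdeal D⁰ K) : vOp (vOp I) = vOp I :=
  congrArg Inv.inv (inv_vOp I)

theorem vOp_le_one {I : FractionalIdeal D⁰ K} (h : I ≤ 1) : vOp I ≤ 1 := by
  simpa only [vOp, inv_one] using vOp_mono h

theorem vOp_spanSingleton (x : K) : vOp (spanSingleton D⁰ x) = spanSingleton D⁰ x := by
  rw [vOp, spanSingleton_inv, spanSingleton_inv, inv_inv]

theorem vOp_spanSingleton_mul {a : K} (ha : a ≠ 0) (I : FractionalIdeal D⁰ K) :
    vOp (spanSingleton D⁰ a * I) = spanSingleton D⁰ a * vOp I := by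
  rw [vOp, vOp, inv_spanSingleton_mul ha, inv_spanSingleton_mul (inv_ne_zero ha), inv_inv]

theorem inv_le_inv_of_le_vOp {I J : FractionalIdeal D⁰ K} (hI : I ≠ 0) (h : I ≤ vOp J) :
    J⁻¹ ≤ I⁻¹ := by
  have hJ : vOp J ≠ 0 := fun h0 => hI (le_antisymm (h0 ▸ h) (zero_le I))
  rw [← inv_vOp J]
  exact inv_anti_mono hI hJ h

/-- `(X * Y_v)⁻¹ = (X * Y)⁻¹` because `x * X ≤ Y⁻¹` is the same as `x * X ≤ (Y_v)⁻¹`. -/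
theorem vOp_mul_vOp (X Y : FractionalIdeal D⁰ K) : vOp (X * vOp Y) = vOp (X * Y) := by
  rcases eq_or_ne X 0 with rfl | hX
  · simp only [zero_mul]
  rcases eq_or_ne Y 0 with rfl | hY
  · simp only [vOp, inv_zero', mul_zero]
  have hXY : X * Y ≠ 0 := mul_ne_zero hX hY
  suffices (X * vOp Y)⁻¹ = (X * Y)⁻¹ from congrArg Inv.inv this
  apply le_antisymm
  · exact inv_anti_mono hXY (mul_ne_zero hX (vOp_eq_zero_iff.not.mpr hY))
      (by gcongr; exact le_vOp Y)
  · have h : (X * Y)⁻¹ * X ≤ (vOp Y)⁻¹ := by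
      rw [inv_vOp, le_inv_iff_mul_le_one hY, mul_assoc, mul_comm]
      exact mul_inv_self_le_one _
    rw [le_inv_iff_mul_le_one (mul_ne_zero hX (vOp_eq_zero_iff.not.mpr hY)), ← mul_assoc]
    calc (X * Y)⁻¹ * X * vOp Y ≤ (vOp Y)⁻¹ * vOp Y := by gcongr
      _ ≤ 1 := by rw [mul_comm]; exact mul_inv_self_le_one _

theorem StarOperation.star_le_vOp (s : StarOperation D K) {I : FractionalIdeal D⁰ K} (hI : I ≠ 0) :
    s.star I ≤ vOp I := by
  rw [vOp, le_inv_iff_mul_le_one (inv_ne_zero' hI), mul_comm, mul_le]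
  intro y hy z hz
  rcases eq_or_ne y 0 with rfl | hy0
  · rw [zero_mul]; exact zero_mem 1
  have hyI : spanSingleton D⁰ y * I ≤ 1 := by
    rw [← le_inv_iff_mul_le_one hI]
    exact spanSingleton_le_iff_mem.mpr hy
  have hystar : spanSingleton D⁰ y * s.star I ≤ 1 := by
    rw [← s.star_smul y hy0 I hI, ← s.star_one]
    exact s.star_mono _ _ (mul_ne_zero (spanSingleton_ne_zero_iff.mpr hy0) hI) one_ne_zero hyI
  exact hystar (mul_mem_mul (mem_spanSingleton_self D⁰ y) hz)

theorem StarOperation.vOp_star (s : StarOperation D K) {I : FractionalIdeal D⁰ K} (hI : I ≠ 0) :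
    vOp (s.star I) = vOp I :=
  le_antisymm (vOp_vOp I ▸ vOp_mono (s.star_le_vOp hI)) (vOp_mono (s.le_star I hI))

def IsVInvertible (I : FractionalIdeal D⁰ K) : Prop :=
  vOp (I * I⁻¹) = 1

theorem IsVInvertible.inv_mul_inv_eq_one {I : FractionalIdeal D⁰ K} (h : IsVInvertible I) :
    (I * I⁻¹)⁻¹ = 1 := by
  rw [← inv_vOp, h, inv_one]

theorem isVInvertible_of_one_le_vOp {I : FractionalIdeal D⁰ K} (h : 1 ≤ vOp (I * I⁻¹)) :
    IsVInvertible I :=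
  le_antisymm (vOp_le_one (mul_inv_self_le_one I)) h

/-- `x` is almost integral: `s * x ^ n ∈ N` for a nonzero `s ∈ D ∩ N`, and a common denominator
of `N` clears these. -/
theorem IsCompletelyIntegrallyClosed.mem_one_of_spanSingleton_mul_le
    (h : IsCompletelyIntegrallyClosed D K) {N : FractionalIdeal D⁰ K} (hN : N ≠ 0) {x : K}
    (hx : spanSingleton D⁰ x * N ≤ N) : x ∈ (1 : FractionalIdeal D⁰ K) := by
  obtain ⟨s, hs0, hs⟩ := exists_ne_zero_mem_isInteger hN
  obtain ⟨d, hd, hdN⟩ := N.isFractional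
  have hpow : ∀ n : ℕ, x ^ n * algebraMap D K s ∈ N := by
    intro n
    induction n with
    | zero => simpa only [pow_zero, one_mul] using hs
    | succ n ih => simpa only [pow_succ', mul_assoc] using spanSingleton_mul_le_iff.mp hx _ ih
  refine (mem_one_iff D⁰).mpr (h x ⟨d * s, mul_ne_zero (nonZeroDivisors.ne_zero hd) hs0, ?_⟩)
  intro n
  obtain ⟨a, ha⟩ := hdN _ (hpow n)
  exact ⟨a, by rw [ha, Algebra.smul_def, map_mul]; ring⟩

theorem IsCompletelyIntegrallyClosed.isVInvertible (h : IsCompletelyIntegrallyClosed D K)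
    {I : FractionalIdeal D⁰ K} (hI : I ≠ 0) : IsVInvertible I := by
  have hII : I * I⁻¹ ≠ 0 := mul_ne_zero hI (inv_ne_zero' hI)
  refine isVInvertible_of_one_le_vOp ?_
  rw [vOp, le_inv_iff_mul_le_one (inv_ne_zero' hII), one_mul]
  intro z hz
  refine h.mem_one_of_spanSingleton_mul_le (inv_ne_zero' hI) ?_
  rw [le_inv_iff_mul_le_one hI, mul_right_comm, mul_assoc, ← le_inv_iff_mul_le_one hII]
  exact spanSingleton_le_iff_mem.mpr hz

theorem mem_inv_mul_inv_of_spanSingleton_mul_le {I : FractionalIdeal D⁰ K} (hI : I ≠ 0) {x : K}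
    (hx : spanSingleton D⁰ x * I ≤ I) : x ∈ (I * I⁻¹)⁻¹ := by
  rw [← spanSingleton_le_iff_mem, le_inv_iff_mul_le_one (mul_ne_zero hI (inv_ne_zero' hI)),
    ← mul_assoc]
  exact (mul_le_mul_left hx _).trans (mul_inv_self_le_one I)

theorem IsCompletelyIntegrallyClosed.of_isVInvertible
    (h : ∀ A : Ideal D, A ≠ ⊥ → IsVInvertible (A : FractionalIdeal D⁰ K)) :
    IsCompletelyIntegrallyClosed D K := by
  rintro x ⟨d, hd0, hxn⟩
  choose a ha using hxn
  set A : Ideal D := Ideal.span (Set.range a)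
  have hA : A ≠ ⊥ := by
    have ha0 : a 0 = d := IsFractionRing.injective D K (by rw [ha 0, pow_zero, mul_one])
    exact fun hA => hd0 (ha0 ▸ (Submodule.eq_bot_iff A).mp hA _ (Ideal.subset_span ⟨0, rfl⟩))
  have hxA : spanSingleton D⁰ x * (A : FractionalIdeal D⁰ K) ≤ A := by
    rw [← coe_le_coe, coe_mul, coe_spanSingleton, coe_coeIdeal, IsLocalization.coeSubmodule_span,
      Submodule.span_mul_span]
    refine Submodule.span_le.mpr ?_
    rintro _ ⟨_, rfl, _, ⟨_, ⟨n, rfl⟩, rfl⟩, rfl⟩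
    refine Submodule.subset_span ⟨a (n + 1), ⟨n + 1, rfl⟩, ?_⟩
    rw [ha (n + 1), ha n, pow_succ]
    ring
  have hx := mem_inv_mul_inv_of_spanSingleton_mul_le (coeIdeal_ne_zero.mpr hA) hxA
  rwa [(h A hA).inv_mul_inv_eq_one, mem_one_iff] at hx

theorem isVInvertible_of_vOp_mul_eq_spanSingleton {a : K} (ha : a ≠ 0)
    {A H J : FractionalIdeal D⁰ K} (hA : A ≠ 0) (hH : H ≠ 0) (hJ : J ≠ 0)
    (hHJ : vOp (H * J) = spanSingleton D⁰ a) (hAH : A ≤ vOp H)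
    (hAJ : spanSingleton D⁰ a * A⁻¹ ≤ vOp J) : IsVInvertible A := by
  set C := spanSingleton D⁰ a
  have hC : C ≠ 0 := spanSingleton_ne_zero_iff.mpr ha
  have hHJC : H * J ≤ C := hHJ ▸ le_vOp _
  have hHA : H ≤ vOp A :=
    calc H ≤ C * J⁻¹ := (le_spanSingleton_mul_inv_iff ha hJ).mpr hHJC
      _ ≤ C * (C * A⁻¹)⁻¹ := by
          gcongr; exact inv_le_inv_of_le_vOp (mul_ne_zero hC (inv_ne_zero' hA)) hAJ
      _ = vOp A := by
          rw [inv_spanSingleton_mul ha, ← mul_assoc, spanSingleton_mul_spanSingleton,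
            mul_inv_cancel₀ ha, spanSingleton_one, one_mul, vOp]
  have hJA : J ≤ C * A⁻¹ :=
    calc J ≤ C * H⁻¹ := (le_spanSingleton_mul_inv_iff ha hH).mpr (mul_comm H J ▸ hHJC)
      _ ≤ C * A⁻¹ := by gcongr; exact inv_le_inv_of_le_vOp hA hAH
  refine isVInvertible_of_one_le_vOp ((spanSingleton_mul_le_spanSingleton_mul_iff ha).mp ?_)
  calc C * 1 = vOp (H * J) := by rw [mul_one, hHJ]
    _ ≤ vOp (vOp A * (C * A⁻¹)) := vOp_mono (mul_le_mul' hHA hJA)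
    _ = C * vOp (A * A⁻¹) := by
      rw [mul_left_comm, vOp_spanSingleton_mul ha, mul_comm (vOp A), vOp_mul_vOp, mul_comm A⁻¹]

theorem isVInvertible_of_isSharpOp_vOp (h : IsSharpOp (D := D) (K := K) vOp) {A : Ideal D}
    (hA : A ≠ ⊥) : IsVInvertible (A : FractionalIdeal D⁰ K) := by
  have hA' : (A : FractionalIdeal D⁰ K) ≠ 0 := coeIdeal_ne_zero.mpr hA
  obtain ⟨c, hc0, hcA⟩ := exists_ne_zero_mem_isInteger hA'
  have hc : algebraMap D K c ≠ 0 := IsFractionRing.to_map_ne_zero_of_mem_nonZeroDivisors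
    (mem_nonZeroDivisors_of_ne_zero hc0)
  have hcA_le_one : spanSingleton D⁰ (algebraMap D K c) * (A : FractionalIdeal D⁰ K)⁻¹ ≤ 1 :=
    (mul_le_mul_left (spanSingleton_le_iff_mem.mpr hcA) _).trans (mul_inv_self_le_one _)
  obtain ⟨B, hB⟩ := le_one_iff_exists_coeIdeal.mp hcA_le_one
  have hB0 : B ≠ ⊥ := by
    rw [← coeIdeal_ne_zero (K := K), hB]
    exact mul_ne_zero (spanSingleton_ne_zero_iff.mpr hc) (inv_ne_zero' hA')
  have hAB : A * B ≤ Ideal.span {c} := by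
    rw [← coeIdeal_le_coeIdeal K, coeIdeal_mul, hB, coeIdeal_span_singleton, mul_left_comm]
    exact mul_le_of_le_one_right' (mul_inv_self_le_one _)
  obtain ⟨H, J, hH, hJ, hHJ, hAH, hBJ⟩ := h _ A B (by simpa using hc0) hA hB0 hAB
  rw [coeIdeal_span_singleton, vOp_spanSingleton] at hHJ
  exact isVInvertible_of_vOp_mul_eq_spanSingleton hc hA' (coeIdeal_ne_zero.mpr hH)
    (coeIdeal_ne_zero.mpr hJ) hHJ.symm hAH (hB ▸ hBJ)

/-- Given `A * B ≤ I`, take `H = A + I` and `J = (I H⁻¹)_v`; `v`-invertibility of `H` gives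
`(H J)_v = (I (H H⁻¹)_v)_v = I_v` and `B ≤ (B H H⁻¹)_v ≤ (I H⁻¹)_v = J_v`. -/
theorem isSharpOp_vOp_of_forall_isVInvertible
    (h : ∀ I : FractionalIdeal D⁰ K, I ≠ 0 → IsVInvertible I) :
    IsSharpOp (D := D) (K := K) vOp := by
  intro I A B hI hA hB hAB
  have hH : A ⊔ I ≠ ⊥ := fun h0 => hA (eq_bot_iff.mpr (h0 ▸ le_sup_left))
  set I' : FractionalIdeal D⁰ K := ↑I
  set H' : FractionalIdeal D⁰ K := ↑(A ⊔ I)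
  have hI' : I' ≠ 0 := coeIdeal_ne_zero.mpr hI
  have hH' : H' ≠ 0 := coeIdeal_ne_zero.mpr hH
  have hHv : vOp (H' * H'⁻¹) = 1 := h H' hH'
  have hG : I' * H'⁻¹ ≤ 1 :=
    (mul_le_mul_left ((coeIdeal_le_coeIdeal K).mpr le_sup_right) _).trans (mul_inv_self_le_one H')
  obtain ⟨J, hJ⟩ := le_one_iff_exists_coeIdeal.mp (vOp_le_one hG)
  have hJ0 : J ≠ ⊥ := by
    rw [← coeIdeal_ne_zero (K := K), hJ, Ne, vOp_eq_zero_iff]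
    exact mul_ne_zero hI' (inv_ne_zero' hH')
  refine ⟨A ⊔ I, J, hH, hJ0, ?_, ?_, ?_⟩
  · rw [hJ, vOp_mul_vOp, mul_left_comm, ← vOp_mul_vOp, hHv, mul_one]
  · exact ((coeIdeal_le_coeIdeal K).mpr le_sup_left).trans (le_vOp H')
  · set B' : FractionalIdeal D⁰ K := ↑B
    have hBH : B' * H' ≤ I' := by
      rw [← coeIdeal_mul, coeIdeal_le_coeIdeal, Ideal.mul_sup]
      exact sup_le (mul_comm A B ▸ hAB) Ideal.mul_le_right
    calc B' ≤ vOp B' := le_vOp B'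
      _ = vOp (B' * vOp (H' * H'⁻¹)) := by rw [hHv, mul_one]
      _ = vOp (B' * H' * H'⁻¹) := by rw [vOp_mul_vOp, mul_assoc]
      _ ≤ vOp (I' * H'⁻¹) := vOp_mono (mul_le_mul_left hBH _)
      _ = vOp J := by rw [hJ, vOp_vOp]

theorem StarOperation.IsSharp.isSharpOp_vOp {s : StarOperation D K} (hs : s.IsSharp) :
    IsSharpOp (D := D) (K := K) vOp := by
  intro I A B hI hA hB hAB
  obtain ⟨H, J, hH, hJ, hIHJ, hAH, hBJ⟩ := hs I A B hI hA hB hAB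
  have hH' : (H : FractionalIdeal D⁰ K) ≠ 0 := coeIdeal_ne_zero.mpr hH
  have hJ' : (J : FractionalIdeal D⁰ K) ≠ 0 := coeIdeal_ne_zero.mpr hJ
  refine ⟨H, J, hH, hJ, ?_, hAH.trans (s.star_le_vOp hH'), hBJ.trans (s.star_le_vOp hJ')⟩
  rw [← s.vOp_star (coeIdeal_ne_zero.mpr hI), hIHJ, s.vOp_star (mul_ne_zero hH' hJ')]

end

/-- A domain `D` is `v`-sharp if and only if `D` is completely
integrally closed. In particular, for any star operation `*` on `D`, a `*`-sharp
domain is completely integrally closed. -/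
theorem statement6 (D : Type*) [CommRing D] [IsDomain D]
    (K : Type*) [Field K] [Algebra D K] [IsFractionRing D K] :
    (IsSharpOp (D := D) (K := K) vOp ↔ IsCompletelyIntegrallyClosed D K) ∧
    (∀ s : StarOperation D K, s.IsSharp → IsCompletelyIntegrallyClosed D K) := by
  have hv : IsSharpOp (D := D) (K := K) vOp ↔ IsCompletelyIntegrallyClosed D K :=
    ⟨fun h => .of_isVInvertible fun _ hA => isVInvertible_of_isSharpOp_vOp h hA,
      fun h => isSharpOp_vOp_of_forall_isVInvertible fun _ hI => h.isVInvertible hI⟩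
  exact ⟨hv, fun _ hs => hv.mp hs.isSharpOp_vOp⟩
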